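/- arXiv:2010.03944 — 5 statements merged into one kernel-verified Lean document; each statement's English description precedes it below -/
import Mathlib

section
/- Let G be a finite group and K a normal subgroup of G. Then β_{G/K}(uK) ≤ β_G(u) for each u ∈ G. -/
/-- The map `θ_u : G → G`, `θ_u(g) = [g^{-u}, g]` where `[x,y] = x⁻¹y⁻¹xy`
and `x^y = y⁻¹xy`. -/
def thetaMap {G : Type*} [Group G] (u g : G) : G :=
  (u⁻¹ * g⁻¹ * u)⁻¹ * g⁻¹ * (u⁻¹ * g⁻¹ * u) * g

/-- `Θ_G(u) = {g ∈ G ∣ θ_u^n(g) = g for some n > 0}`. -/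
def ThetaSet {G : Type*} [Group G] (u : G) : Set G :=
  {g | ∃ n > 0, (thetaMap u)^[n] g = g}

/-- The forward orbit of `g` under `θ_u`; for `g ∈ Θ_G(u)` this is the orbit of `g`
under the permutation that `θ_u` induces on `Θ_G(u)`. -/
def thetaOrbit {G : Type*} [Group G] (u g : G) : Set G :=
  {h | ∃ n : ℕ, (thetaMap u)^[n] g = h}

/-- The eventual orbits of `θ_u`: the orbits of the permutation induced by `θ_u`
on `Θ_G(u)`, other than the fixed orbit `{1}`. -/
def eventualOrbits {G : Type*} [Group G] (u : G) : Set (Set G) :=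
  {O | (∃ g ∈ ThetaSet u, O = thetaOrbit u g) ∧ O ≠ {1}}

/-- `β_G(u)`: the number of eventual orbits of `θ_u`. -/
noncomputable def beta {G : Type*} [Group G] (u : G) : ℕ :=
  (eventualOrbits u).ncard

/-!
`θ` commutes with every group homomorphism `φ`, so `φ` maps the `θ_u`-orbit of `g` onto the
`θ_{φ u}`-orbit of `φ g`. In a finite group every forward orbit runs into a cycle, and a
periodic orbit is the forward orbit of each of its points; hence for surjective `φ` every cycle
of `θ_{φ u}` is the image of a cycle of `θ_u`, a nontrivial one of a nontrivial one, and
`β_H(φ u) ≤ β_G(u)`. The theorem is the case of the quotient map `G → G/K`.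
-/

open Function Set

namespace Function

variable {α : Type*}

theorem exists_iterate_mem_periodicPts [Finite α] (f : α → α) (x : α) :
    ∃ m, f^[m] x ∈ periodicPts f := by
  obtain ⟨m, n, hne, heq⟩ := Finite.exists_ne_map_eq_of_infinite (f^[·] x)
  wlog hlt : m < n generalizing m n
  · exact this n m hne.symm heq.symm (by omega)
  refine ⟨m, mk_mem_periodicPts (n := n - m) (by omega) ?_⟩
  change f^[n - m] (f^[m] x) = f^[m] x
  rw [← iterate_add_apply, Nat.sub_add_cancel hlt.le, ← heq]

theorem range_iterate_apply_iterate {f : α → α} {x : α} (hx : x ∈ periodicPts f) (m : ℕ) :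
    range (f^[·] (f^[m] x)) = range (f^[·] x) := by
  have hxm : f^[m] x ∈ periodicPts f := by
    obtain ⟨n, hn, hper⟩ := hx
    exact mk_mem_periodicPts hn (hper.apply_iterate m)
  ext y
  rw [mem_range, mem_range, ← mem_periodicOrbit_iff hx, ← mem_periodicOrbit_iff hxm,
    periodicOrbit_apply_iterate_eq hx]

end Function

section Theta

variable {G H : Type*} [Group G] [Group H]

theorem thetaSet_eq_periodicPts (u : G) : ThetaSet u = periodicPts (thetaMap u) := rfl

theorem thetaOrbit_eq_range (u g : G) : thetaOrbit u g = range ((thetaMap u)^[·] g) := rfl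

theorem semiconj_thetaMap (φ : G →* H) (u : G) : Semiconj φ (thetaMap u) (thetaMap (φ u)) :=
  fun g ↦ by simp [thetaMap]

theorem image_thetaOrbit (φ : G →* H) (u g : G) :
    φ '' thetaOrbit u g = thetaOrbit (φ u) (φ g) := by
  rw [thetaOrbit_eq_range, thetaOrbit_eq_range, ← range_comp]
  exact congrArg range (funext fun n ↦ ((semiconj_thetaMap φ u).iterate_right n).eq g)

theorem thetaOrbit_iterate {u g : G} (hg : g ∈ ThetaSet u) (m : ℕ) :
    thetaOrbit u ((thetaMap u)^[m] g) = thetaOrbit u g :=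
  range_iterate_apply_iterate (thetaSet_eq_periodicPts u ▸ hg) m

theorem eventualOrbits_subset_image [Finite G] {φ : G →* H} (hφ : Surjective φ) (u : G) :
    eventualOrbits (φ u) ⊆ image φ '' eventualOrbits u := by
  rintro _ ⟨⟨y, hy, rfl⟩, hne⟩
  obtain ⟨g, rfl⟩ := hφ y
  obtain ⟨m, hm⟩ := exists_iterate_mem_periodicPts (thetaMap u) g
  have himage : φ '' thetaOrbit u ((thetaMap u)^[m] g) = thetaOrbit (φ u) (φ g) := by
    rw [image_thetaOrbit, ((semiconj_thetaMap φ u).iterate_right m).eq, thetaOrbit_iterate hy]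
  refine ⟨_, ⟨⟨_, thetaSet_eq_periodicPts u ▸ hm, rfl⟩, fun htriv ↦ hne ?_⟩, himage⟩
  rw [← himage, htriv, image_singleton, map_one]

theorem beta_le_of_surjective [Finite G] {φ : G →* H} (hφ : Surjective φ) (u : G) :
    beta (φ u) ≤ beta u :=
  calc beta (φ u) ≤ (image φ '' eventualOrbits u).ncard :=
        ncard_le_ncard (eventualOrbits_subset_image hφ u) (toFinite _)
    _ ≤ beta u := ncard_image_le (toFinite _)

end Theta

/-- If `K` is a normal subgroup of a finite group `G`, then `β_{G/K}(uK) ≤ β_G(u)`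
for each `u ∈ G`. -/
theorem beta_quotient_le {G : Type*} [Group G] [Finite G] (K : Subgroup G) [K.Normal]
    (u : G) : beta (u : G ⧸ K) ≤ beta u :=
  beta_le_of_surjective (QuotientGroup.mk'_surjective K) u
end

section
/- Let G be a finite group and Y a subgroup of the centre Z(G) of G. Then β_{G/Y}(uY) = β_G(u) for each u ∈ G. -/
open Function Set

namespace Function

variable {α β : Type*}

def periodicOrbits (f : α → α) : Set (Set α) :=
  {O | ∃ x ∈ periodicPts f, O = range fun n => f^[n] x}

theorem injOn_periodicPts (f : α → α) : InjOn f (periodicPts f) := by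
  rintro x ⟨p, hp, hx⟩ y ⟨q, hq, hy⟩ hxy
  exact (hx.mul_const q).eq_of_apply_eq_same (hy.const_mul p) (Nat.mul_pos hp hq) hxy

theorem range_iterate_iterate_of_mem_periodicPts {f : α → α} {x : α} (hx : x ∈ periodicPts f)
    (m : ℕ) : (range fun n => f^[n] (f^[m] x)) = range fun n => f^[n] x := by
  have hfx : f^[m] x ∈ periodicPts f := (Commute.iterate_self f m).mapsTo_periodicPts hx
  ext y
  simp only [mem_range, ← mem_periodicOrbit_iff hx, ← mem_periodicOrbit_iff hfx,
    periodicOrbit_apply_iterate_eq hx]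

theorem Semiconj.image_range_iterate {π : α → β} {f : α → α} {g : β → β} (h : Semiconj π f g)
    (x : α) : π '' (range fun n => f^[n] x) = range fun n => g^[n] (π x) := by
  rw [← range_comp]
  exact congrArg range (funext fun n => (h.iterate_right n).eq x)

theorem singleton_mem_periodicOrbits {f : α → α} {a : α} (ha : IsFixedPt f a) :
    {a} ∈ periodicOrbits f :=
  ⟨a, ⟨1, one_pos, ha⟩, by simp [iterate_fixed ha]⟩

theorem bijOn_image_periodicOrbits_comp (π : α → β) (L : β → α) :
    BijOn (image π) (periodicOrbits (L ∘ π)) (periodicOrbits (π ∘ L)) := by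
  have hπ : Semiconj π (L ∘ π) (π ∘ L) := fun _ => rfl
  have hL : Semiconj L (π ∘ L) (L ∘ π) := fun _ => rfl
  refine ⟨?_, ?_, ?_⟩
  · rintro _ ⟨x, hx, rfl⟩
    exact ⟨π x, hπ.mapsTo_periodicPts hx, hπ.image_range_iterate x⟩
  · rintro _ ⟨x, hx, rfl⟩ _ ⟨y, hy, rfl⟩ hxy
    obtain ⟨_, ⟨m, rfl⟩, hm⟩ : π y ∈ π '' range fun n => (L ∘ π)^[n] x :=
      hxy ▸ mem_image_of_mem π ⟨0, rfl⟩
    have hxm := (Commute.iterate_self (L ∘ π) m).mapsTo_periodicPts hx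
    have hym : (L ∘ π)^[m] x = y := injOn_periodicPts _ hxm hy (congrArg L hm)
    rw [← hym, range_iterate_iterate_of_mem_periodicPts hx]
  · rintro _ ⟨y, hy, rfl⟩
    refine ⟨_, ⟨L y, hL.mapsTo_periodicPts hy, rfl⟩, ?_⟩
    rw [hπ.image_range_iterate]
    exact range_iterate_iterate_of_mem_periodicPts hy 1

end Function

section Theta

variable {G : Type*} [Group G]

theorem thetaMap_one (u : G) : thetaMap u 1 = 1 := by
  simp [thetaMap]

theorem map_thetaMap {H : Type*} [Group H] (φ : G →* H) (u g : G) :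
    φ (thetaMap u g) = thetaMap (φ u) (φ g) := by
  simp [thetaMap]

theorem thetaMap_mul_of_mem_center (u g : G) {z : G} (hz : z ∈ Subgroup.center G) :
    thetaMap u (g * z) = thetaMap u g := by
  have hcomm : ∀ x, x * z = z * x := Subgroup.mem_center_iff.mp hz
  have hconj : u⁻¹ * (g * z)⁻¹ * u = z⁻¹ * (u⁻¹ * g⁻¹ * u) := by
    rw [mul_inv_rev, ← mul_assoc, Subgroup.mem_center_iff.mp (inv_mem hz) u⁻¹]
    group
  calc thetaMap u (g * z)
      = (u⁻¹ * g⁻¹ * u)⁻¹ * g⁻¹ * (z⁻¹ * ((u⁻¹ * g⁻¹ * u) * g) * z) := by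
        rw [thetaMap, hconj]
        group
    _ = thetaMap u g := by
        rw [mul_assoc z⁻¹, hcomm, inv_mul_cancel_left, thetaMap]
        group

theorem exists_thetaMap_eq_comp_mk {Y : Subgroup G} [Y.Normal] (hY : Y ≤ Subgroup.center G)
    (u : G) : ∃ L : G ⧸ Y → G,
      thetaMap u = L ∘ QuotientGroup.mk ∧ thetaMap (u : G ⧸ Y) = QuotientGroup.mk ∘ L := by
  refine ⟨Quotient.lift (thetaMap u) fun a b hab => ?_, rfl, ?_⟩
  · rw [← mul_inv_cancel_left a b]
    exact (thetaMap_mul_of_mem_center u a (hY (QuotientGroup.leftRel_apply.mp hab))).symm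
  · funext q
    induction q using QuotientGroup.induction_on with
    | H g => exact (map_thetaMap (QuotientGroup.mk' Y) u g).symm

theorem eventualOrbits_eq_periodicOrbits_diff (u : G) :
    eventualOrbits u = periodicOrbits (thetaMap u) \ {{1}} :=
  rfl

end Theta

theorem beta_central_quotient_eq_general {G : Type*} [Group G] (Y : Subgroup G)
    [Y.Normal] (hY : Y ≤ Subgroup.center G) (u : G) :
    beta (u : G ⧸ Y) = beta u := by
  obtain ⟨L, hθ, hθY⟩ := exists_thetaMap_eq_comp_mk hY u
  have hfix : IsFixedPt (L ∘ QuotientGroup.mk) 1 := hθ ▸ thetaMap_one u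
  have hbij := (bijOn_image_periodicOrbits_comp QuotientGroup.mk L).sdiff_singleton
    (singleton_mem_periodicOrbits hfix)
  rw [image_singleton, QuotientGroup.mk_one] at hbij
  rw [beta, beta, eventualOrbits_eq_periodicOrbits_diff, eventualOrbits_eq_periodicOrbits_diff,
    hθ, hθY]
  exact hbij.ncard_eq.symm

/-- If `Y` is a subgroup of the centre of a finite group `G`, then
`β_{G/Y}(uY) = β_G(u)` for each `u ∈ G`. -/
theorem beta_central_quotient_eq {G : Type*} [Group G] [Finite G] (Y : Subgroup G)
    [Y.Normal] (hY : Y ≤ Subgroup.center G) (u : G) :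
    beta (u : G ⧸ Y) = beta u :=
  beta_central_quotient_eq_general Y hY u
end

section
/- Let L be a non-abelian group, F a finite field, and M a simple FL-module which is ℓ-dimensional over F for some prime ℓ and on which L acts faithfully. Then every FL-module endomorphism of M is scalar multiplication by an element of F. -/
open Algebra Module

section Schur

variable {k L M : Type*} [CommRing k] [Monoid L] [AddCommGroup M] [Module k M]
  {ρ : Representation k L M}

theorem injective_of_forall_commute_of_ne_zero
    (hsimple : ∀ W : Submodule k M, (∀ (g : L), ∀ m ∈ W, ρ g m ∈ W) → W = ⊥ ∨ W = ⊤)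
    {ψ : Module.End k M} (hψ : ∀ g, Commute (ρ g) ψ) (hψ0 : ψ ≠ 0) : Function.Injective ψ := by
  have hinv (g : L) (m : M) (hm : m ∈ LinearMap.ker ψ) : ρ g m ∈ LinearMap.ker ψ := by
    rw [LinearMap.mem_ker] at hm ⊢
    rw [← Module.End.mul_apply, ← (hψ g).eq, Module.End.mul_apply, hm, map_zero]
  rcases hsimple _ hinv with hker | hker
  · exact LinearMap.ker_eq_bot.mp hker
  · exact absurd (LinearMap.ker_eq_top.mp hker) hψ0

end Schur

section Adjoin

variable {F L M : Type*} [Field F] [Monoid L] [AddCommGroup M] [Module F M]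
  {ρ : Representation F L M} {φ : Module.End F M}

theorem isField_adjoin_of_forall_commute [FiniteDimensional F M] [Nontrivial M]
    (hsimple : ∀ W : Submodule F M, (∀ (g : L), ∀ m ∈ W, ρ g m ∈ W) → W = ⊥ ∨ W = ⊤)
    (hφ : ∀ g, Commute (ρ g) φ) : IsField F[φ] := by
  have : NoZeroDivisors F[φ] := by
    refine ⟨fun {x y} hxy => or_iff_not_imp_left.mpr fun hx => ?_⟩
    have hinj : Function.Injective (x : Module.End F M) :=
      injective_of_forall_commute_of_ne_zero hsimple
        (fun g => commute_of_mem_adjoin_singleton_of_commute x.2 (hφ g))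
        (by exact_mod_cast hx)
    ext m
    exact hinj (by simpa using LinearMap.congr_fun (congrArg Subtype.val hxy) m)
  have : IsDomain F[φ] := NoZeroDivisors.to_isDomain _
  exact isField_of_isIntegral_of_isField' (Field.toIsField F)

theorem commute_of_finrank_adjoin_eq_one [StrongRankCondition F[φ]] [Module.Free F[φ] M]
    (h : finrank F[φ] M = 1) {f g : Module.End F M} (hf : Commute f φ) (hg : Commute g φ) :
    Commute f g := by
  have lift (f : Module.End F M) (hf : Commute f φ) : ∃ f' : Module.End F[φ] M, ∀ m, f' m = f m :=
    ⟨{ f with map_smul' := fun s m =>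
        congr($((commute_of_mem_adjoin_singleton_of_commute s.2 hf).eq) m) }, fun _ => rfl⟩
  obtain ⟨f', hf'⟩ := lift f hf
  obtain ⟨g', hg'⟩ := lift g hg
  obtain ⟨a, rfl⟩ := (f'.existsUnique_eq_smul_id_of_finrank_eq_one h).exists
  obtain ⟨b, rfl⟩ := (g'.existsUnique_eq_smul_id_of_finrank_eq_one h).exists
  ext m
  simp only [Module.End.mul_apply, ← hf', ← hg', LinearMap.smul_apply, LinearMap.id_apply,
    smul_smul, mul_comm]

end Adjoin

theorem endomorphism_is_scalar_general {L : Type*} [Group L] (hna : ∃ a b : L, a * b ≠ b * a)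
    {F : Type*} [Field F]
    {M : Type*} [AddCommGroup M] [Module F M]
    (ρ : Representation F L M)
    (hfaithful : ∀ g : L, ρ g = 1 → g = 1)
    {ℓ : ℕ} (hℓ : ℓ.Prime) (hdim : Module.finrank F M = ℓ)
    (hM : Nontrivial M)
    (hsimple : ∀ W : Submodule F M, (∀ (g : L), ∀ m ∈ W, ρ g m ∈ W) → W = ⊥ ∨ W = ⊤)
    (φ : M →ₗ[F] M) (hφ : ∀ (g : L) (m : M), φ (ρ g m) = ρ g (φ m)) :
    ∃ c : F, ∀ m : M, φ m = c • m := by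
  have : FiniteDimensional F M := Module.finite_of_finrank_pos (hdim ▸ hℓ.pos)
  have hcomm (g : L) : Commute (ρ g) φ := LinearMap.ext fun m => (hφ g m).symm
  let := (isField_adjoin_of_forall_commute hsimple hcomm).toField
  have htower : finrank F F[φ] * finrank F[φ] M = ℓ := hdim ▸ finrank_mul_finrank F F[φ] M
  rcases hℓ.eq_one_or_self_of_dvd _ (Dvd.intro _ htower) with hK | hK
  · obtain ⟨c, hc⟩ := Algebra.mem_bot.mp
      (Subalgebra.finrank_eq_one_iff.mp hK ▸ self_mem_adjoin_singleton F φ)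
    exact ⟨c, fun m => by rw [← hc]; rfl⟩
  · obtain ⟨a, b, hab⟩ := hna
    have hM1 : finrank F[φ] M = 1 := by
      rw [hK] at htower
      exact (Nat.mul_eq_left hℓ.ne_zero).mp htower
    have hρab := commute_of_finrank_adjoin_eq_one hM1 (hcomm a) (hcomm b)
    exact absurd ((injective_iff_map_eq_one ρ).mpr hfaithful
      (by rw [map_mul, map_mul, hρab.eq])) hab

/-- Let `L` be a non-abelian group, `F` a finite field and `M` a simple `FL`-module of
prime dimension `ℓ` over `F` on which `L` acts faithfully.  Then every `FL`-module
endomorphism of `M` is scalar multiplication by an element of `F`. -/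
theorem endomorphism_is_scalar {L : Type*} [Group L] (hna : ∃ a b : L, a * b ≠ b * a)
    {F : Type*} [Field F] [Fintype F]
    {M : Type*} [AddCommGroup M] [Module F M]
    (ρ : Representation F L M)
    (hfaithful : ∀ g : L, ρ g = 1 → g = 1)
    {ℓ : ℕ} (hℓ : ℓ.Prime) (hdim : Module.finrank F M = ℓ)
    (hM : Nontrivial M)
    (hsimple : ∀ W : Submodule F M, (∀ (g : L), ∀ m ∈ W, ρ g m ∈ W) → W = ⊥ ∨ W = ⊤)
    (φ : M →ₗ[F] M) (hφ : ∀ (g : L) (m : M), φ (ρ g m) = ρ g (φ m)) :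
    ∃ c : F, ∀ m : M, φ m = c • m :=
  endomorphism_is_scalar_general hna ρ hfaithful hℓ hdim hM hsimple φ hφ
end

section
/- Let L be a non-abelian group, F a finite field, and M a simple FL-module which is ℓ-dimensional over F for some prime ℓ and on which L acts faithfully. Suppose L ≤ G and N is an FG-module on which G acts faithfully, and suppose that N, regarded as an FL-module by restriction, is isomorphic to the direct sum M^m of m copies of M. Then |C_G(L)| ≤ |GLₘ(F)|, where C_G(L) is the centralizer of L in G and GLₘ(F) is the group of invertible m×m matrices over F. -/
/-!
By Schur's lemma, an endomorphism `φ` of `M` commuting with `L` generates a field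
`F[φ] ≅ F[X]/(minpoly φ)` over which `M` is a vector space, so `[F[φ] : F]` divides `ℓ`. If it
were `ℓ`, then `M` would be a line over `F[φ]`, and `L`, acting `F[φ]`-linearly, would act through
a commutative group, contradicting faithfulness. Hence `End_L(M) = F`. An element of `C_G(L)` acts
on `N ≅ M^m` by an `L`-endomorphism, that is, by an `m × m` matrix over `End_L(M) = F`, and
faithfulness of `G` on `N` makes this an embedding `C_G(L) ↪ GLₘ(F)`.
-/

open Module Polynomial

theorem Nat.card_le_card_units_of_range_subset {G X Y : Type*} [Group G] [Monoid X] [Monoid Y]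
    [Finite Y] (f : G →* X) (j : Y →* X) (hf : Function.Injective f) (hj : Function.Injective j)
    (h : Set.range f ⊆ Set.range j) : Nat.card G ≤ Nat.card Yˣ := by
  choose y hy using fun g => h ⟨g, rfl⟩
  let y' : G →* Y :=
    { toFun := y
      map_one' := hj (by rw [hy, map_one, map_one])
      map_mul' := fun a b => hj (by rw [hy, map_mul, map_mul, hy, hy]) }
  refine Nat.card_le_card_of_injective y'.toHomUnits fun a b hab => hf ?_
  rw [← hy, ← hy]
  exact congrArg (j ∘ Units.val) hab

theorem Module.End.finrank_eq_one_or_commute_of_algHom {F K M : Type*} [Field F] [Field K]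
    [Algebra F K] [AddCommGroup M] [Module F M] (hprime : (finrank F M).Prime)
    (f : K →ₐ[F] Module.End F M) :
    finrank F K = 1 ∨ ∀ a b : Module.End F M,
      (∀ k, Commute (f k) a) → (∀ k, Commute (f k) b) → Commute a b := by
  let : Module K M := Module.compHom M f.toRingHom
  have : IsScalarTower F K M := ⟨fun c k x => by
    change f (c • k) x = c • f k x
    rw [map_smul, LinearMap.smul_apply]⟩
  have htower := finrank_mul_finrank F K M
  refine (hprime.eq_one_or_self_of_dvd _ ⟨_, htower.symm⟩).imp_right fun hK a b ha hb => ?_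
  have hKM : finrank K M = 1 := by
    rw [hK] at htower
    exact (Nat.mul_eq_left hprime.ne_zero).1 htower
  have scalar : ∀ a : Module.End F M, (∀ k, Commute (f k) a) → ∃ c : K, ∀ x, a x = f c x :=
    fun a ha => by
      let aK : M →ₗ[K] M := { a with map_smul' := fun k x => (LinearMap.congr_fun (ha k) x).symm }
      obtain ⟨c, hc, -⟩ := LinearMap.existsUnique_eq_smul_id_of_finrank_eq_one hKM aK
      exact ⟨c, fun x => LinearMap.congr_fun hc x⟩
  obtain ⟨c, hc⟩ := scalar a ha
  obtain ⟨d, hd⟩ := scalar b hb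
  ext x
  simp only [Module.End.mul_apply, hc, hd]
  rw [← Module.End.mul_apply, ← map_mul, mul_comm, map_mul, Module.End.mul_apply]

namespace Representation

variable {F L M : Type*} [Field F] [Monoid L] [AddCommGroup M] [Module F M]
  {ρ : Representation F L M}

theorem isIrreducible_of_forall_invariant [Nontrivial M]
    (h : ∀ W : Submodule F M, (∀ g, ∀ m ∈ W, ρ g m ∈ W) → W = ⊥ ∨ W = ⊤) : ρ.IsIrreducible where
  exists_pair_ne := ⟨⊥, ⊤, fun h => bot_ne_top (congrArg Subrepresentation.toSubmodule h)⟩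
  eq_bot_or_eq_top W := (h W.toSubmodule fun g _ hm => W.apply_mem_toSubmodule g hm).imp
    (fun hW => Subrepresentation.ext hW) (fun hW => Subrepresentation.ext hW)

namespace IsIrreducible

variable [ρ.IsIrreducible] {φ : Module.End F M}

theorem bijective_of_commute (hφ : ∀ l, Commute (ρ l) φ) (h0 : φ ≠ 0) : Function.Bijective φ :=
  (bijective_or_eq_zero (φ.intertwiningMap_of_isIntertwiningMap ρ ρ fun l x =>
    (LinearMap.congr_fun (hφ l) x).symm)).resolve_right fun h => h0 (by
      ext x; exact LinearMap.congr_fun (congrArg IntertwiningMap.toLinearMap h) x)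

theorem irreducible_minpoly [FiniteDimensional F M] [Nontrivial M]
    (hφ : ∀ l, Commute (ρ l) φ) : Irreducible (minpoly F φ) := by
  have hp : minpoly F φ ≠ 0 := minpoly.ne_zero (.of_finite F φ)
  refine ⟨minpoly.not_isUnit F φ, fun a b hab => ?_⟩
  have ha : a ≠ 0 := left_ne_zero_of_mul (hab ▸ hp)
  have hb : b ≠ 0 := right_ne_zero_of_mul (hab ▸ hp)
  by_cases hbφ : aeval φ b = 0
  · refine .inl (isUnit_of_associated_mul (associated_of_dvd_dvd ?_ (dvd_mul_right b a)) hb)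
    rw [mul_comm, ← hab]
    exact minpoly.dvd F φ hbφ
  · have hunit : IsUnit (aeval φ b) := (Module.End.isUnit_iff _).2 <| bijective_of_commute
      (fun l => Algebra.commute_of_mem_adjoin_singleton_of_commute
        (aeval_mem_adjoin_singleton F φ) (hφ l)) hbφ
    have haφ : aeval φ a = 0 := by
      rw [← hunit.mul_left_eq_zero, ← map_mul, ← hab, minpoly.aeval]
    refine .inr (isUnit_of_associated_mul (associated_of_dvd_dvd ?_ (dvd_mul_right a b)) ha)
    rw [← hab]
    exact minpoly.dvd F φ haφ

theorem mem_range_algebraMap_of_commute (hℓ : (finrank F M).Prime)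
    (hnc : ∃ a b, ¬Commute (ρ a) (ρ b)) (hφ : ∀ l, Commute (ρ l) φ) :
    φ ∈ Set.range (algebraMap F (Module.End F M)) := by
  have : FiniteDimensional F M := Module.finite_of_finrank_pos hℓ.pos
  have : Nontrivial M := Module.nontrivial_of_finrank_pos hℓ.pos
  have : Fact (Irreducible (minpoly F φ)) := ⟨irreducible_minpoly hφ⟩
  let f : AdjoinRoot (minpoly F φ) →ₐ[F] Module.End F M :=
    Ideal.Quotient.liftₐ _ (aeval φ) fun q hq => by
      obtain ⟨r, rfl⟩ := Ideal.mem_span_singleton'.1 hq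
      rw [map_mul, minpoly.aeval, mul_zero]
  have hf : ∀ q, f (AdjoinRoot.mk _ q) = aeval φ q := fun q => rfl
  have hcomm : ∀ l k, Commute (f k) (ρ l) := fun l k => by
    obtain ⟨q, rfl⟩ := AdjoinRoot.mk_surjective k
    rw [hf]
    exact (Algebra.commute_of_mem_adjoin_singleton_of_commute
      (aeval_mem_adjoin_singleton F φ) (hφ l)).symm
  rcases Module.End.finrank_eq_one_or_commute_of_algHom hℓ f with hK | hK
  · have hroot : AdjoinRoot.root (minpoly F φ) ∈ (⊥ : Subalgebra F _) := by
      rw [Subalgebra.bot_eq_top_of_finrank_eq_one hK]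
      exact Algebra.mem_top
    obtain ⟨c, hc⟩ := Algebra.mem_bot.1 hroot
    refine ⟨c, ?_⟩
    rw [← f.commutes, hc, AdjoinRoot.root, hf, aeval_X]
  · obtain ⟨a, b, hab⟩ := hnc
    exact absurd (hK _ _ (hcomm a) (hcomm b)) hab

end IsIrreducible

end Representation

section

variable {F L M : Type*} [Field F] [Monoid L] [AddCommGroup M] [Module F M]
  {ι : Type*} [Fintype ι] [DecidableEq ι]

theorem endVecRingEquivMatrixEnd_piMap (f : Module.End F M) :
    endVecRingEquivMatrixEnd ι F M (LinearMap.piMap fun _ => f) = Matrix.scalar ι f := by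
  ext i j x
  change f ((Pi.single j x : ι → M) i) = _
  by_cases hij : i = j
  · subst hij; simp
  · simp [hij]

theorem endVecRingEquivMatrixEnd_mem_range_mapMatrix {ρ : Representation F L M}
    (hρ : ∀ φ : Module.End F M, (∀ l, Commute (ρ l) φ) →
      φ ∈ Set.range (algebraMap F (Module.End F M)))
    {T : Module.End F (ι → M)} (hT : ∀ l, Commute (LinearMap.piMap fun _ => ρ l) T) :
    endVecRingEquivMatrixEnd ι F M T ∈ Set.range (algebraMap F (Module.End F M)).mapMatrix := by
  have hentry : ∀ i j, endVecRingEquivMatrixEnd ι F M T i j ∈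
      Set.range (algebraMap F (Module.End F M)) := fun i j => hρ _ fun l => by
    have := Matrix.scalar_commute_iff.1 <|
      endVecRingEquivMatrixEnd_piMap (ι := ι) (ρ l) ▸ (hT l).map (endVecRingEquivMatrixEnd ι F M)
    have := congrFun₂ this i j
    simp only [Matrix.smul_apply, smul_eq_mul, op_smul_eq_mul] at this
    exact this
  choose c hc using hentry
  exact ⟨Matrix.of c, by ext i j : 2; simp [hc]⟩

end

/-- Let `L ≤ G`, let `M` be a simple `FL`-module of prime dimension `ℓ` over the finite
field `F` on which `L` acts faithfully, and let `N` be an `FG`-module on which `G` acts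
faithfully.  If `N`, regarded as an `FL`-module by restriction, is isomorphic to `M^m`,
then `|C_G(L)| ≤ |GLₘ(F)|`. -/
theorem card_centralizer_le_card_GL {F : Type*} [Field F] [Fintype F]
    {G : Type*} [Group G] (L : Subgroup G)
    {M : Type*} [AddCommGroup M] [Module F M]
    (ρM : Representation F L M)
    (hna : ∃ a b : L, a * b ≠ b * a)
    (hfaithM : ∀ g : L, ρM g = 1 → g = 1)
    {ℓ : ℕ} (hℓ : ℓ.Prime) (hdim : Module.finrank F M = ℓ)
    (hM : Nontrivial M)
    (hsimple : ∀ W : Submodule F M, (∀ (g : L), ∀ m ∈ W, ρM g m ∈ W) → W = ⊥ ∨ W = ⊤)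
    {N : Type*} [AddCommGroup N] [Module F N]
    (ρN : Representation F G N)
    (hfaithN : ∀ g : G, ρN g = 1 → g = 1)
    {m : ℕ} (e : N ≃ₗ[F] (Fin m → M))
    (he : ∀ (l : L) (x : N), e (ρN (l : G) x) = fun i => ρM l (e x i)) :
    Nat.card (Subgroup.centralizer (L : Set G)) ≤
      Nat.card (Matrix.GeneralLinearGroup (Fin m) F) := by
  have : ρM.IsIrreducible := Representation.isIrreducible_of_forall_invariant hsimple
  have hnc : ∃ a b : L, ¬Commute (ρM a) (ρM b) := by
    obtain ⟨a, b, hab⟩ := hna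
    refine ⟨a, b, fun h => hab ((injective_iff_map_eq_one ρM).2 hfaithM ?_)⟩
    rw [map_mul, map_mul, h.eq]
  have hscalar := fun φ => this.mem_range_algebraMap_of_commute (φ := φ) (hdim ▸ hℓ) hnc
  let τ : Subgroup.centralizer (L : Set G) →* Module.End F (Fin m → M) :=
    e.conjRingEquiv.toMonoidHom.comp (ρN.comp (Subgroup.subtype _))
  have hτ : Function.Injective τ := e.conjRingEquiv.injective.comp
    (((injective_iff_map_eq_one ρN).2 hfaithN).comp Subtype.val_injective)
  have hdiag : ∀ l : L, e.conjRingEquiv (ρN l) = LinearMap.piMap fun _ => ρM l := fun l => by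
    refine LinearMap.ext fun x => funext fun i => ?_
    simpa using congrFun (he l (e.symm x)) i
  have hτL : ∀ g l, Commute (LinearMap.piMap fun _ => ρM l) (τ g) := fun g l => by
    rw [← hdiag]
    have hlg : Commute (l : G) g := Subgroup.mem_centralizer_iff.1 g.2 l l.2
    exact (hlg.map ρN).map e.conjRingEquiv
  refine Nat.card_le_card_units_of_range_subset
    ((endVecRingEquivMatrixEnd (Fin m) F M).toMonoidHom.comp τ)
    (algebraMap F (Module.End F M)).mapMatrix.toMonoidHom
    ((endVecRingEquivMatrixEnd (Fin m) F M).injective.comp hτ)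
    (Matrix.map_injective (algebraMap F (Module.End F M)).injective) ?_
  rintro _ ⟨g, rfl⟩
  exact endVecRingEquivMatrixEnd_mem_range_mapMatrix hscalar (hτL g)
end

section
/- Let q = 2^f ≥ 4 be a power of 2, let G = SL₂(F_q), and let u be the matrix with rows (0, 1) and (1, 0). Then β_G(u) ≥ (q − 2)/2. In particular, every element w of SL₂(F_q) of the form with rows (1, 1) and (μ, μ+1) for μ ∈ F_q \ F₂ lies in a nontrivial eventual orbit of θ_u, and if w with entries a, b, c, d satisfies a+d ≠ 0 and b+c ≠ 0 and θ_u(w) has entries A, B, C, D with A+D ≠ 0 and B+C ≠ 0, then (A+D)/(B+C) = ((a+d)/(b+c))⁻¹. -/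
/-!
In characteristic 2 we have `u⁻¹ g⁻¹ u = gᵀ`, so `θ_u(g) = [gᵀ, g]`. Writing `t = a + d`,
`s = b + c` and `σ = t + s` for `g = !![a, b; c, d]`, a direct computation gives
`t(θ_u g) = (s σ)²` and `s(θ_u g) = t s σ²`. Hence `t s / σ²` is constant on `θ_u`-orbits,
and `θ_u` inverts the ratio `t / s`. On the set `t s σ ≠ 0`, which `θ_u` preserves, one recovers
`t`, `s`, then `a + b` from `θ_u g`, and these determine `g` because `det g = 1` and `σ ≠ 0`;
so `θ_u` is injective there and, the group being finite, every such `g` is periodic.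
The matrices `w_μ = !![1, 1; μ, μ + 1]` with `μ ∉ 𝔽₂` lie in this set and have invariant
`μ (μ + 1)`. As `μ ↦ μ² + μ` is two-to-one, the `q - 2` matrices `w_μ` meet at least
`(q - 2) / 2` distinct eventual orbits.
-/

open Matrix Function Set
open scoped MatrixGroups Matrix.SpecialLinearGroup

theorem Set.MapsTo.mem_periodicPts_of_injOn {α : Type*} {f : α → α} {s : Set α}
    (hs : s.Finite) (hmaps : MapsTo f s s) (hinj : InjOn f s) {x : α} (hx : x ∈ s) :
    x ∈ periodicPts f := by
  have : Finite s := hs.to_subtype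
  have hper := (hmaps.restrict_inj.mpr hinj).mem_periodicPts ⟨x, hx⟩
  exact Semiconj.mapsTo_periodicPts (fun y => hmaps.val_restrict_apply y) hper

def antitrace {R : Type*} [Add R] (M : Matrix (Fin 2) (Fin 2) R) : R := M 0 1 + M 1 0

section CommRing

variable {R : Type*} [CommRing R]

local notation:1024 "↑ₘ" A:1024 => ((A : SL(2, R)) : Matrix (Fin 2) (Fin 2) R)

theorem exists_coe_eq (g : SL(2, R)) : ∃ a b c d : R, ↑ₘg = !![a, b; c, d] :=
  ⟨_, _, _, _, eta_fin_two ↑ₘg⟩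

theorem mul_sub_mul_eq_one_of_coe_eq {g : SL(2, R)} {a b c d : R}
    (hg : ↑ₘg = !![a, b; c, d]) : a * d - b * c = 1 := by
  rw [← det_fin_two_of, ← hg, g.det_coe]

def orbitRep (μ : R) : SL(2, R) :=
  ⟨!![1, 1; μ, μ + 1], by rw [det_fin_two_of]; ring⟩

theorem orbitRep_ne_one {μ : R} (hμ : μ ≠ 0) : orbitRep μ ≠ 1 := fun h =>
  hμ (by simpa [orbitRep] using congrArg (fun g : SL(2, R) => ↑ₘg 1 0) h)

theorem antitrace_orbitRep (μ : R) : antitrace ↑ₘ(orbitRep μ) = μ + 1 := by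
  simp only [orbitRep, antitrace, of_apply, cons_val', cons_val_zero, cons_val_one,
    empty_val', cons_val_fin_one]
  ring

variable [CharP R 2]

theorem swap_mul_inv_mul_swap_eq_transpose {u : SL(2, R)} (hu : ↑ₘu = !![0, 1; 1, 0])
    (g : SL(2, R)) : u⁻¹ * g⁻¹ * u = gᵀ := by
  ext i j
  fin_cases i <;> fin_cases j <;>
    simp [Matrix.SpecialLinearGroup.coe_transpose, hu, adjugate_fin_two, mul_apply,
      Fin.sum_univ_two, CharTwo.neg_eq]

theorem thetaMap_eq_commutator_transpose {u : SL(2, R)} (hu : ↑ₘu = !![0, 1; 1, 0])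
    (g : SL(2, R)) : thetaMap u g = (gᵀ)⁻¹ * g⁻¹ * gᵀ * g := by
  rw [thetaMap, swap_mul_inv_mul_swap_eq_transpose hu]

theorem coe_thetaMap_eq {u : SL(2, R)} (hu : ↑ₘu = !![0, 1; 1, 0]) {g : SL(2, R)}
    {a b c d : R} (hg : ↑ₘg = !![a, b; c, d]) :
    ↑ₘ(thetaMap u g) = !![d, c; b, a] * !![d, b; c, a] * !![a, c; b, d] * !![a, b; c, d] := by
  have hgT : !![a, b; c, d]ᵀ = !![a, c; b, d] := (transposeᵣ_eq _).symm
  simp only [thetaMap_eq_commutator_transpose hu, Matrix.SpecialLinearGroup.coe_mul,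
    Matrix.SpecialLinearGroup.coe_inv, Matrix.SpecialLinearGroup.coe_transpose, hg, hgT,
    adjugate_fin_two_of, CharTwo.neg_eq]

theorem trace_thetaMap {u : SL(2, R)} (hu : ↑ₘu = !![0, 1; 1, 0]) (g : SL(2, R)) :
    trace ↑ₘ(thetaMap u g) = (antitrace ↑ₘg * (trace ↑ₘg + antitrace ↑ₘg)) ^ 2 := by
  obtain ⟨a, b, c, d, hg⟩ := exists_coe_eq g
  simp only [coe_thetaMap_eq hu hg, hg, mul_fin_two, trace_fin_two, antitrace, of_apply,
    cons_val', cons_val_zero, cons_val_one, empty_val', cons_val_fin_one]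
  ring_nf
  reduce_mod_char!

theorem antitrace_thetaMap {u : SL(2, R)} (hu : ↑ₘu = !![0, 1; 1, 0]) (g : SL(2, R)) :
    antitrace ↑ₘ(thetaMap u g) =
      trace ↑ₘg * antitrace ↑ₘg * (trace ↑ₘg + antitrace ↑ₘg) ^ 2 := by
  obtain ⟨a, b, c, d, hg⟩ := exists_coe_eq g
  simp only [coe_thetaMap_eq hu hg, hg, mul_fin_two, trace_fin_two, antitrace, of_apply,
    cons_val', cons_val_zero, cons_val_one, empty_val', cons_val_fin_one]
  ring_nf
  reduce_mod_char!

theorem trace_add_antitrace_thetaMap {u : SL(2, R)} (hu : ↑ₘu = !![0, 1; 1, 0])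
    (g : SL(2, R)) :
    trace ↑ₘ(thetaMap u g) + antitrace ↑ₘ(thetaMap u g) =
      antitrace ↑ₘg * (trace ↑ₘg + antitrace ↑ₘg) ^ 3 := by
  rw [trace_thetaMap hu, antitrace_thetaMap hu]
  ring

theorem topRowSum_thetaMap {u : SL(2, R)} (hu : ↑ₘu = !![0, 1; 1, 0]) (g : SL(2, R)) :
    ↑ₘ(thetaMap u g) 0 0 + ↑ₘ(thetaMap u g) 0 1 =
      1 + antitrace ↑ₘg * (trace ↑ₘg + antitrace ↑ₘg) *
        (1 + (trace ↑ₘg + antitrace ↑ₘg) ^ 2 +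
          (↑ₘg 0 0 + ↑ₘg 0 1) * (trace ↑ₘg + antitrace ↑ₘg)) := by
  obtain ⟨a, b, c, d, hg⟩ := exists_coe_eq g
  have hdet := mul_sub_mul_eq_one_of_coe_eq hg
  simp only [coe_thetaMap_eq hu hg, hg, mul_fin_two, trace_fin_two, antitrace, of_apply,
    cons_val', cons_val_zero, cons_val_one, empty_val', cons_val_fin_one]
  -- the coefficient is the quotient of the difference by `a * d + b * c + 1` over `𝔽₂`
  linear_combination (norm := ring_nf)
    (a * b + a * c + a * d + b ^ 2 + b * c + b * d + c ^ 2 + c * d + 1) * hdet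
  reduce_mod_char!

theorem coe_zero_zero_mul_sum (g : SL(2, R)) :
    ↑ₘg 0 0 * (trace ↑ₘg + antitrace ↑ₘg) =
      1 + (↑ₘg 0 0 + ↑ₘg 0 1) ^ 2 + (↑ₘg 0 0 + ↑ₘg 0 1) * antitrace ↑ₘg := by
  obtain ⟨a, b, c, d, hg⟩ := exists_coe_eq g
  have hdet := mul_sub_mul_eq_one_of_coe_eq hg
  simp only [hg, trace_fin_two, antitrace, of_apply, cons_val', cons_val_zero, cons_val_one,
    empty_val', cons_val_fin_one]
  linear_combination (norm := ring_nf) hdet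
  reduce_mod_char!

theorem trace_orbitRep (μ : R) : trace ↑ₘ(orbitRep μ) = μ := by
  simp only [orbitRep, trace_fin_two, of_apply, cons_val', cons_val_zero, cons_val_one,
    empty_val', cons_val_fin_one]
  ring_nf
  reduce_mod_char!

theorem trace_add_antitrace_orbitRep (μ : R) :
    trace ↑ₘ(orbitRep μ) + antitrace ↑ₘ(orbitRep μ) = 1 := by
  rw [trace_orbitRep, antitrace_orbitRep, ← add_assoc, CharTwo.add_self_eq_zero, zero_add]

end CommRing

section Field

variable {F : Type*} [Field F] [CharP F 2]

local notation:1024 "↑ₘ" A:1024 => ((A : SL(2, F)) : Matrix (Fin 2) (Fin 2) F)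

theorem CharTwo.mul_add_one_eq_mul_add_one_iff {μ ν : F} :
    ν * (ν + 1) = μ * (μ + 1) ↔ ν = μ ∨ ν = μ + 1 := by
  have key : ν * (ν + 1) - μ * (μ + 1) = (ν - μ) * (ν - (μ + 1)) := by
    ring_nf
    reduce_mod_char!
  rw [← sub_eq_zero, key, mul_eq_zero, sub_eq_zero, sub_eq_zero]

/-- Inverts the formulas of `trace_thetaMap`, `antitrace_thetaMap` and `topRowSum_thetaMap`. -/
theorem CharTwo.eq_of_theta_sums_eq {t s p t' s' p' : F} (hne : t * s * (t + s) ≠ 0)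
    (hT : (s' * (t' + s')) ^ 2 = (s * (t + s)) ^ 2)
    (hS : t' * s' * (t' + s') ^ 2 = t * s * (t + s) ^ 2)
    (hP : 1 + s' * (t' + s') * (1 + (t' + s') ^ 2 + p' * (t' + s')) =
      1 + s * (t + s) * (1 + (t + s) ^ 2 + p * (t + s))) :
    t' = t ∧ s' = s ∧ p' = p := by
  obtain ⟨hts, hσ⟩ := mul_ne_zero_iff.mp hne
  obtain ⟨-, hs⟩ := mul_ne_zero_iff.mp hts
  have h1 : s' * (t' + s') = s * (t + s) := CharTwo.sq_injective hT
  have h2 : t' * (t' + s') = t * (t + s) :=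
    mul_right_cancel₀ (mul_ne_zero hs hσ) (by linear_combination hS - t' * (t' + s') * h1)
  have hσ' : t' + s' = t + s := CharTwo.sq_injective (by linear_combination h1 + h2)
  have hs' : s' = s := mul_right_cancel₀ hσ (by linear_combination h1 - s' * hσ')
  obtain rfl : t' = t := by linear_combination hσ' - hs'
  subst hs'
  exact ⟨rfl, rfl, mul_right_cancel₀ (mul_ne_zero hs (pow_ne_zero 2 hσ)) (by linear_combination hP)⟩

theorem eq_of_trace_antitrace_topRowSum_eq {g g' : SL(2, F)}
    (hσ : trace ↑ₘg + antitrace ↑ₘg ≠ 0) (ht : trace ↑ₘg = trace ↑ₘg')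
    (hs : antitrace ↑ₘg = antitrace ↑ₘg') (hp : ↑ₘg 0 0 + ↑ₘg 0 1 = ↑ₘg' 0 0 + ↑ₘg' 0 1) :
    g = g' := by
  have ha : ↑ₘg 0 0 = ↑ₘg' 0 0 := by
    apply mul_right_cancel₀ hσ
    rw [coe_zero_zero_mul_sum, ht, hs, hp, ← coe_zero_zero_mul_sum]
  rw [trace_fin_two, trace_fin_two] at ht
  have hb : ↑ₘg 0 1 = ↑ₘg' 0 1 := by linear_combination hp - ha
  have hd : ↑ₘg 1 1 = ↑ₘg' 1 1 := by linear_combination ht - ha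
  have hc : ↑ₘg 1 0 = ↑ₘg' 1 0 := by simp only [antitrace] at hs; linear_combination hs - hb
  ext i j
  fin_cases i <;> fin_cases j <;> assumption

def nondegenerateSet : Set SL(2, F) :=
  {g | trace ↑ₘg * antitrace ↑ₘg * (trace ↑ₘg + antitrace ↑ₘg) ≠ 0}

theorem mapsTo_thetaMap_nondegenerateSet {u : SL(2, F)} (hu : ↑ₘu = !![0, 1; 1, 0]) :
    MapsTo (thetaMap u) nondegenerateSet nondegenerateSet := by
  intro g hg
  simp only [nondegenerateSet, mem_ofPred_eq, mul_ne_zero_iff] at hg ⊢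
  rw [trace_add_antitrace_thetaMap hu, trace_thetaMap hu, antitrace_thetaMap hu]
  obtain ⟨⟨ht, hs⟩, hσ⟩ := hg
  simp [ht, hs, hσ]

theorem injOn_thetaMap_nondegenerateSet {u : SL(2, F)} (hu : ↑ₘu = !![0, 1; 1, 0]) :
    InjOn (thetaMap u) nondegenerateSet := by
  intro g hg g' _ h
  have hT := trace_thetaMap hu g'
  have hS := antitrace_thetaMap hu g'
  have hP := topRowSum_thetaMap hu g'
  rw [← h, trace_thetaMap hu] at hT
  rw [← h, antitrace_thetaMap hu] at hS
  rw [← h, topRowSum_thetaMap hu] at hP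
  obtain ⟨ht, hs, hp⟩ := CharTwo.eq_of_theta_sums_eq hg hT.symm hS.symm hP.symm
  exact eq_of_trace_antitrace_topRowSum_eq (right_ne_zero_of_mul hg) ht.symm hs.symm hp.symm

theorem mem_ThetaSet_of_mem_nondegenerateSet [Finite F] {u : SL(2, F)}
    (hu : ↑ₘu = !![0, 1; 1, 0]) {g : SL(2, F)} (hg : g ∈ nondegenerateSet) :
    g ∈ ThetaSet u :=
  (mapsTo_thetaMap_nondegenerateSet hu).mem_periodicPts_of_injOn (toFinite _)
    (injOn_thetaMap_nondegenerateSet hu) hg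

theorem orbitRep_mem_ThetaSet [Finite F] {u : SL(2, F)} (hu : ↑ₘu = !![0, 1; 1, 0]) {μ : F}
    (h0 : μ ≠ 0) (h1 : μ ≠ 1) : orbitRep μ ∈ ThetaSet u := by
  apply mem_ThetaSet_of_mem_nondegenerateSet hu
  simp only [nondegenerateSet, mem_ofPred_eq]
  rw [trace_add_antitrace_orbitRep, mul_one, trace_orbitRep, antitrace_orbitRep]
  exact mul_ne_zero h0 fun h => h1 (CharTwo.add_eq_zero.mp h)

theorem trace_div_antitrace_thetaMap {u : SL(2, F)} (hu : ↑ₘu = !![0, 1; 1, 0]) (g : SL(2, F))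
    (h : trace ↑ₘ(thetaMap u g) ≠ 0) :
    trace ↑ₘ(thetaMap u g) / antitrace ↑ₘ(thetaMap u g) = (trace ↑ₘg / antitrace ↑ₘg)⁻¹ := by
  rw [trace_thetaMap hu] at h ⊢
  rw [antitrace_thetaMap hu, inv_div]
  obtain ⟨hs, hσ⟩ := mul_ne_zero_iff.mp (pow_ne_zero_iff two_ne_zero |>.mp h)
  rcases eq_or_ne (trace ↑ₘg) 0 with ht | ht
  · simp [ht]
  · field_simp

def thetaInvariant (g : SL(2, F)) : F :=
  trace ↑ₘg * antitrace ↑ₘg / (trace ↑ₘg + antitrace ↑ₘg) ^ 2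

theorem thetaInvariant_thetaMap {u : SL(2, F)} (hu : ↑ₘu = !![0, 1; 1, 0]) (g : SL(2, F)) :
    thetaInvariant (thetaMap u g) = thetaInvariant g := by
  rw [thetaInvariant, trace_add_antitrace_thetaMap hu, trace_thetaMap hu, antitrace_thetaMap hu,
    thetaInvariant]
  generalize trace ↑ₘg = t, antitrace ↑ₘg = s
  rcases eq_or_ne s 0 with hs | hs
  · simp [hs]
  rcases eq_or_ne (t + s) 0 with hσ | hσ
  · simp [hσ]
  field_simp

theorem thetaInvariant_iterate_thetaMap {u : SL(2, F)} (hu : ↑ₘu = !![0, 1; 1, 0])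
    (g : SL(2, F)) (n : ℕ) : thetaInvariant ((thetaMap u)^[n] g) = thetaInvariant g :=
  congrFun (iterate_invariant (f := thetaMap u) (g := thetaInvariant)
    (funext (thetaInvariant_thetaMap hu)) n) g

theorem thetaInvariant_orbitRep (μ : F) : thetaInvariant (orbitRep μ) = μ * (μ + 1) := by
  rw [thetaInvariant, trace_add_antitrace_orbitRep, one_pow, div_one, trace_orbitRep,
    antitrace_orbitRep]

theorem eq_or_eq_add_one_of_thetaOrbit_orbitRep_eq {u : SL(2, F)} (hu : ↑ₘu = !![0, 1; 1, 0])
    {μ ν : F} (h : thetaOrbit u (orbitRep ν) = thetaOrbit u (orbitRep μ)) :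
    ν = μ ∨ ν = μ + 1 := by
  have hν : orbitRep ν ∈ thetaOrbit u (orbitRep μ) := h ▸ ⟨0, rfl⟩
  obtain ⟨n, hn⟩ := hν
  have := thetaInvariant_iterate_thetaMap hu (orbitRep μ) n
  rw [hn, thetaInvariant_orbitRep, thetaInvariant_orbitRep] at this
  exact CharTwo.mul_add_one_eq_mul_add_one_iff.mp this

theorem thetaOrbit_orbitRep_mem_eventualOrbits [Finite F] {u : SL(2, F)}
    (hu : ↑ₘu = !![0, 1; 1, 0]) {μ : F} (h0 : μ ≠ 0) (h1 : μ ≠ 1) :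
    thetaOrbit u (orbitRep μ) ∈ eventualOrbits u := by
  refine ⟨⟨_, orbitRep_mem_ThetaSet hu h0 h1, rfl⟩, fun h => orbitRep_ne_one h0 ?_⟩
  have hμ : orbitRep μ ∈ thetaOrbit u (orbitRep μ) := ⟨0, rfl⟩
  rwa [h] at hμ

theorem card_sub_two_div_two_le_beta [Fintype F] {u : SL(2, F)} (hu : ↑ₘu = !![0, 1; 1, 0]) :
    (Fintype.card F - 2) / 2 ≤ beta u := by
  classical
  let s : Finset F := Finset.univ \ {0, 1}
  let orbit : F → Set SL(2, F) := fun μ => thetaOrbit u (orbitRep μ)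
  have hs : s.card = Fintype.card F - 2 := by
    rw [Finset.card_sdiff_of_subset (Finset.subset_univ _), Finset.card_univ,
      Finset.card_pair zero_ne_one]
  have hfiber : ∀ o ∈ s.image orbit, {μ ∈ s | orbit μ = o}.card ≤ 2 := by
    intro o ho
    obtain ⟨μ, -, rfl⟩ := Finset.mem_image.mp ho
    refine le_trans (Finset.card_le_card fun ν hν => ?_) (Finset.card_le_two (a := μ) (b := μ + 1))
    rcases eq_or_eq_add_one_of_thetaOrbit_orbitRep_eq hu (Finset.mem_filter.mp hν).2 with h | h <;>
      simp [h]
  have himage : (s.image orbit).card ≤ beta u := by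
    rw [beta, ← Set.ncard_coe_finset]
    refine Set.ncard_le_ncard fun o ho => ?_
    obtain ⟨μ, hμ, rfl⟩ := Finset.mem_image.mp (Finset.mem_coe.mp ho)
    simp only [s, Finset.mem_sdiff, Finset.mem_univ, Finset.mem_insert, Finset.mem_singleton,
      true_and, not_or] at hμ
    exact thetaOrbit_orbitRep_mem_eventualOrbits hu hμ.1 hμ.2
  have := Finset.card_le_mul_card_image s 2 hfiber
  omega

end Field

theorem beta_SL2_char_two_general {F : Type*} [Field F] [Fintype F]
    (hchar : ringChar F = 2)
    (u : Matrix.SpecialLinearGroup (Fin 2) F)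
    (hu : (u : Matrix (Fin 2) (Fin 2) F) = !![0, 1; 1, 0]) :
    (Fintype.card F - 2) / 2 ≤ beta u ∧
      (∀ (w : Matrix.SpecialLinearGroup (Fin 2) F) (μ : F), μ ≠ 0 → μ ≠ 1 →
        (w : Matrix (Fin 2) (Fin 2) F) = !![1, 1; μ, μ + 1] →
        w ∈ ThetaSet u ∧ w ≠ 1) ∧
      (∀ w : Matrix.SpecialLinearGroup (Fin 2) F,
        w.val 0 0 + w.val 1 1 ≠ 0 →
        w.val 0 1 + w.val 1 0 ≠ 0 →
        (thetaMap u w).val 0 0 + (thetaMap u w).val 1 1 ≠ 0 →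
        (thetaMap u w).val 0 1 + (thetaMap u w).val 1 0 ≠ 0 →
        ((thetaMap u w).val 0 0 + (thetaMap u w).val 1 1) /
            ((thetaMap u w).val 0 1 + (thetaMap u w).val 1 0) =
          ((w.val 0 0 + w.val 1 1) / (w.val 0 1 + w.val 1 0))⁻¹) := by
  have : CharP F 2 := ringChar.of_eq hchar
  refine ⟨card_sub_two_div_two_le_beta hu, ?_, ?_⟩
  · rintro w μ h0 h1 hw
    obtain rfl : w = orbitRep μ := Subtype.ext hw
    exact ⟨orbitRep_mem_ThetaSet hu h0 h1, orbitRep_ne_one h0⟩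
  · intro w _ _ hT _
    have := trace_div_antitrace_thetaMap hu w (by rwa [trace_fin_two])
    simpa only [trace_fin_two, antitrace] using this

/-- Let `q = 2^f ≥ 4` (formalized: `F` a finite field of characteristic `2` with
`|F| ≥ 4`), let `G = SL₂(F_q)` and let `u = !![0,1;1,0]`.  Then
`β_G(u) ≥ (q-2)/2`; every `w = !![1,1;μ,μ+1]` with `μ ∈ F_q \ F₂` lies in a
non-trivial eventual orbit of `θ_u`; and whenever `w` has entries `a b c d` with
`a+d ≠ 0` and `b+c ≠ 0`, and `θ_u(w)` has entries `A B C D` with `A+D ≠ 0` and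
`B+C ≠ 0`, then `(A+D)/(B+C) = ((a+d)/(b+c))⁻¹`. -/
theorem beta_SL2_char_two {F : Type*} [Field F] [Fintype F]
    (hchar : ringChar F = 2) (hq : 4 ≤ Fintype.card F)
    (u : Matrix.SpecialLinearGroup (Fin 2) F)
    (hu : (u : Matrix (Fin 2) (Fin 2) F) = !![0, 1; 1, 0]) :
    (Fintype.card F - 2) / 2 ≤ beta u ∧
      (∀ (w : Matrix.SpecialLinearGroup (Fin 2) F) (μ : F), μ ≠ 0 → μ ≠ 1 →
        (w : Matrix (Fin 2) (Fin 2) F) = !![1, 1; μ, μ + 1] →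
        w ∈ ThetaSet u ∧ w ≠ 1) ∧
      (∀ w : Matrix.SpecialLinearGroup (Fin 2) F,
        w.val 0 0 + w.val 1 1 ≠ 0 →
        w.val 0 1 + w.val 1 0 ≠ 0 →
        (thetaMap u w).val 0 0 + (thetaMap u w).val 1 1 ≠ 0 →
        (thetaMap u w).val 0 1 + (thetaMap u w).val 1 0 ≠ 0 →
        ((thetaMap u w).val 0 0 + (thetaMap u w).val 1 1) /
            ((thetaMap u w).val 0 1 + (thetaMap u w).val 1 0) =
          ((w.val 0 0 + w.val 1 1) / (w.val 0 1 + w.val 1 0))⁻¹) :=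
  beta_SL2_char_two_general hchar u hu
end
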